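/- For every integer n ≥ 4 and every k ∈ {1,…,n}, the subgraph of CW_n induced by the vertices not lying in the copy CW_n^k (i.e. induced by {σ ∈ S_n : σ(n) ≠ k}) has vertex connectivity at least 2n − 4. -/

import Mathlib

/-!
Fibre the permutations by their last value `σ n`. Each fibre carries a copy of the star–path
Cayley graph `SP_{n-1}`, generated by the transpositions `(1 j)` and `(j j+1)`, and the
transpositions `(1 n)` and `(2 n)` join different fibres. By induction on `m`, starting from
`SP_3 = K_{3,3}` and using the same fibre decomposition, `SP_m` stays connected after deleting
any `2m - 4` vertices.

Now delete a set `F` of at most `2n - 5` vertices outside the copy `CW_n^k`. If no fibre loses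
more than `2n - 6` vertices, every fibre stays connected, and between any two groups of
fibres the `(1 n)`-edges form a matching too large for `F` to block. Otherwise one fibre
contains all of `F`. The other fibres are then untouched, and every surviving vertex of the bad
fibre escapes into them along `(1 n)` or `(2 n)`, one of which avoids the copy `k`.
-/

/-- The generating set S₂ = {(1 j) : 2 ≤ j ≤ n} ∪ {(j j+1) : 2 ≤ j ≤ n−1} ∪ {(2 n)},
where elements of {1,…,n} are encoded zero-indexed as `Fin n` (value k represents k+1). -/
def cwGen (n : ℕ) : Set (Equiv.Perm (Fin n)) :=
  {s | ∃ i j : Fin n, s = Equiv.swap i j ∧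
      (((i : ℕ) = 0 ∧ j ≠ i) ∨
       ((j : ℕ) = (i : ℕ) + 1 ∧ 1 ≤ (i : ℕ)) ∨
       ((i : ℕ) = 1 ∧ (j : ℕ) = n - 1))}

/-- The Cayley graph CW_n = Cay(S_n, S₂). -/
def CW (n : ℕ) : SimpleGraph (Equiv.Perm (Fin n)) where
  Adj g h := g ≠ h ∧ g⁻¹ * h ∈ cwGen n
  symm := by
    constructor
    rintro g h ⟨hne, i, j, hs, hc⟩
    refine ⟨hne.symm, i, j, ?_, hc⟩
    have hinv : h⁻¹ * g = (g⁻¹ * h)⁻¹ := by group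
    rw [hinv, hs, Equiv.swap_inv]
  loopless := ⟨fun g h => h.1 rfl⟩

/-- The vertex connectivity κ(G): the least size of a vertex set S such that G − S
is disconnected or has at most one vertex. -/
noncomputable def kappa {V : Type*} (G : SimpleGraph V) : ℕ :=
  sInf {k | ∃ S : Set V, S.ncard = k ∧ (¬ (G.induce Sᶜ).Connected ∨ Sᶜ.ncard ≤ 1)}

open Equiv SimpleGraph
open scoped Nat

namespace SimpleGraph

variable {V W ι : Type*} {G : SimpleGraph V} {H : SimpleGraph W} {T T' : Set V} {u v w : V}

-- `G.ReachIn T u u` holds even when `u ∉ T`.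
def ReachIn (G : SimpleGraph V) (T : Set V) : V → V → Prop :=
  Relation.ReflTransGen fun a b => a ∈ T ∧ b ∈ T ∧ G.Adj a b

@[refl] lemma ReachIn.refl (u : V) : G.ReachIn T u u := Relation.ReflTransGen.refl

lemma ReachIn.trans (huv : G.ReachIn T u v) (hvw : G.ReachIn T v w) : G.ReachIn T u w :=
  Relation.ReflTransGen.trans huv hvw

lemma Adj.reachIn (hu : u ∈ T) (hv : v ∈ T) (h : G.Adj u v) : G.ReachIn T u v :=
  Relation.ReflTransGen.single ⟨hu, hv, h⟩

lemma ReachIn.symm (h : G.ReachIn T u v) : G.ReachIn T v u := by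
  induction h with
  | refl => rfl
  | tail _ hab ih => exact (Adj.reachIn hab.2.1 hab.1 hab.2.2.symm).trans ih

lemma ReachIn.mono (hT : T ⊆ T') (h : G.ReachIn T u v) : G.ReachIn T' u v :=
  Relation.ReflTransGen.mono (fun _ _ hab => ⟨hT hab.1, hT hab.2.1, hab.2.2⟩) _ _ h

lemma ReachIn.map {S : Set W} {a b : W} (f : H →g G) (hS : Set.MapsTo f S T)
    (h : H.ReachIn S a b) : G.ReachIn T (f a) (f b) :=
  Relation.ReflTransGen.lift f (fun _ _ hab => ⟨hS hab.1, hS hab.2.1, f.map_adj hab.2.2⟩) _ _ h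

lemma ReachIn.reachable_induce (h : G.ReachIn T u v) (hu : u ∈ T) (hv : v ∈ T) :
    (G.induce T).Reachable ⟨u, hu⟩ ⟨v, hv⟩ := by
  induction h with
  | refl => rfl
  | tail _ hab ih =>
    exact (ih hab.1).trans (Adj.reachable (G := G.induce T) (u := ⟨_, hab.1⟩) hab.2.2)

lemma reachIn_of_fibers {c : V → ι} {I : Set ι} (hT : ∀ v ∈ T, c v ∈ I)
    (hfiber : ∀ u ∈ T, ∀ v ∈ T, c u = c v → G.ReachIn T u v)
    (hcut : ∀ A ⊆ I, (∃ u ∈ T, c u ∈ A) → (∃ v ∈ T, c v ∉ A) →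
      ∃ a ∈ T, ∃ b ∈ T, c a ∈ A ∧ c b ∉ A ∧ G.Adj a b)
    (hu : u ∈ T) (hv : v ∈ T) : G.ReachIn T u v := by
  set A : Set ι := {i | i ∈ I ∧ ∃ w ∈ T, c w = i ∧ G.ReachIn T u w}
  have huA : c u ∈ A := ⟨hT u hu, u, hu, rfl, .refl u⟩
  obtain ⟨-, w, hw, hwv, huw⟩ : c v ∈ A := by
    by_contra hvA
    obtain ⟨a, ha, b, hb, ⟨-, w, hw, hwa, huw⟩, hbA, hab⟩ :=
      hcut A (fun _ hi => hi.1) ⟨u, hu, huA⟩ ⟨v, hv, hvA⟩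
    exact hbA ⟨hT b hb, b, hb, rfl,
      (huw.trans (hfiber w hw a ha hwa)).trans (Adj.reachIn ha hb hab)⟩
  exact huw.trans (hfiber w hw v hv hwv)

def IsPreconnectedAfterDeleting (G : SimpleGraph V) (k : ℕ) : Prop :=
  ∀ F : Set V, F.ncard ≤ k → ∀ u ∉ F, ∀ v ∉ F, G.ReachIn Fᶜ u v

lemma mulCayley_adj_mul {Γ : Type*} [Group Γ] {s : Set Γ} {t : Γ} (ht : t ∈ s) (ht1 : t ≠ 1)
    (g : Γ) : (mulCayley s).Adj g (g * t) :=
  (mulCayley_adj' s _ _).2 ⟨by simpa using ht1, t, ht, Or.inl rfl⟩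

end SimpleGraph

lemma le_kappa_induce {V : Type*} {G : SimpleGraph V} {P : Set V} {c : ℕ}
    (hreach : ∀ F ⊆ P, F.ncard < c → ∀ u ∈ P \ F, ∀ v ∈ P \ F, G.ReachIn (P \ F) u v)
    (hcard : ∀ F ⊆ P, F.ncard < c → 1 < (P \ F).ncard) :
    c ≤ kappa (G.induce P) := by
  refine le_csInf ⟨_, Set.univ, rfl, Or.inr (by simp)⟩ ?_
  rintro _ ⟨S, rfl, hS⟩
  by_contra! hSc
  set F := Subtype.val '' S
  have hFP : F ⊆ P := Subtype.coe_image_subset P S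
  have hFc : F.ncard < c := by rwa [Set.ncard_image_of_injective _ Subtype.val_injective]
  have hScard : Sᶜ.ncard = (P \ F).ncard := by
    rw [← Set.image_val_compl, Set.ncard_image_of_injective _ Subtype.val_injective]
  have hmem {x : P} (hx : x ∈ Sᶜ) : (x : V) ∈ P \ F := by
    rw [← Set.image_val_compl]; exact ⟨x, hx, rfl⟩
  have h2 := hcard F hFP hFc
  refine hS.elim (fun hdis => hdis ?_) (by omega)
  obtain ⟨x, hx⟩ : Sᶜ.Nonempty := Set.nonempty_of_ncard_ne_zero (by omega)
  let hom : G.induce (P \ F) →g (G.induce P).induce Sᶜ :=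
    { toFun := fun y => ⟨⟨y, y.2.1⟩, fun hy => y.2.2 ⟨_, hy, rfl⟩⟩, map_rel' := id }
  refine (connected_iff _).2 ⟨fun ⟨y, hy⟩ ⟨z, hz⟩ => ?_, ⟨⟨x, hx⟩⟩⟩
  exact ((hreach F hFP hFc _ (hmem hy) _ (hmem hz)).reachable_induce (hmem hy) (hmem hz)).map hom

namespace CayleyStarPath

section Counting

variable {α : Type*} [Finite α] [DecidableEq α] {x y : α} {A B : Set α}

lemma le_ncard_setOf_apply_mem_apply_mem (hxy : x ≠ y) (hAB : Disjoint A B) :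
    (Nat.card α - 2)! * (A.ncard * B.ncard) ≤ {σ : Perm α | σ x ∈ A ∧ σ y ∈ B}.ncard := by
  -- `τ a b` sends `x ↦ a` and `y ↦ b`; the permutations fixing `x` and `y` supply the rest
  let τ (a b : α) : Perm α := swap (swap x a y) b * swap x a
  have hfix (π : Perm {z // z ≠ x ∧ z ≠ y}) {z} (hz : z = x ∨ z = y) : Perm.ofSubtype π z = z :=
    Perm.ofSubtype_apply_of_not_mem π (by tauto)
  have hτx {a b : α} (hab : a ≠ b) : τ a b x = a := by
    have : swap x a y ≠ a := by
      rw [swap_apply_def]; split_ifs <;> grind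
    simp [τ, swap_apply_of_ne_of_ne this.symm hab]
  have hτy (a b : α) : τ a b y = b := by simp [τ]
  let f (d : A × B × Perm {z // z ≠ x ∧ z ≠ y}) : {σ : Perm α | σ x ∈ A ∧ σ y ∈ B} :=
    ⟨τ d.1 d.2.1 * Perm.ofSubtype d.2.2, by
      simp [hfix, hτx (hAB.ne_of_mem d.1.2 d.2.1.2), hτy]⟩
  have hf : Function.Injective f := by
    rintro ⟨⟨a, ha⟩, ⟨b, hb⟩, π⟩ ⟨⟨a', ha'⟩, ⟨b', hb'⟩, π'⟩ h
    have h' : τ a b * Perm.ofSubtype π = τ a' b' * Perm.ofSubtype π' := congrArg Subtype.val h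
    have hab : a ≠ b := hAB.ne_of_mem ha hb
    have hab' : a' ≠ b' := hAB.ne_of_mem ha' hb'
    obtain rfl : a = a' := by simpa [hfix, hτx hab, hτx hab'] using congrArg (· x) h'
    obtain rfl : b = b' := by simpa [hfix, hτy] using congrArg (· y) h'
    obtain rfl : π = π' := Perm.ofSubtype_injective (mul_left_cancel h')
    rfl
  have hcard : Nat.card {z // z ≠ x ∧ z ≠ y} = Nat.card α - 2 := by
    rw [← Set.ncard_pair hxy, ← Set.ncard_compl, ← Nat.card_coe_set_eq]
    exact Nat.card_congr (Equiv.subtypeEquivRight (by simp))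
  calc (Nat.card α - 2)! * (A.ncard * B.ncard)
      = Nat.card (A × B × Perm {z // z ≠ x ∧ z ≠ y}) := by
        simp [Nat.card_prod, Nat.card_perm, hcard, Nat.card_coe_set_eq]; ring
    _ ≤ _ := by rw [← Nat.card_coe_set_eq]; exact Nat.card_le_card_of_injective f hf

lemma exists_notMem_mul_swap_notMem (hxy : x ≠ y) (hAB : Disjoint A B) (F : Set (Perm α))
    (hF : (F ∩ {σ | σ x ∈ A ∪ B}).ncard < (Nat.card α - 2)! * (A.ncard * B.ncard)) :
    ∃ σ ∉ F, σ * swap y x ∉ F ∧ σ x ∈ A ∧ σ y ∈ B := by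
  classical
  by_contra! hblocked
  have hxσ (σ : Perm α) : (σ * swap y x) x = σ y := by simp
  -- the edges `σ — σ * swap y x` leaving the `A`-fibres form a matching, and each one is blocked
  let f (σ : Perm α) : Perm α := if σ ∈ F then σ else σ * swap y x
  have hmaps : ∀ σ ∈ {σ : Perm α | σ x ∈ A ∧ σ y ∈ B}, f σ ∈ F ∩ {σ | σ x ∈ A ∪ B} := by
    rintro σ ⟨hσA, hσB⟩
    by_cases hσ : σ ∈ F
    · simp [f, hσ, hσA]
    · have : σ * swap y x ∈ F := by_contra fun h => hblocked σ hσ h hσA hσB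
      simp [f, hσ, this, hσB]
  have hinj : Set.InjOn f {σ | σ x ∈ A ∧ σ y ∈ B} := by
    rintro σ ⟨hσA, hσB⟩ τ ⟨hτA, hτB⟩ h
    by_cases hσ : σ ∈ F <;> by_cases hτ : τ ∈ F <;> simp only [f, hσ, hτ, if_true, if_false] at h
    · exact h
    · exact (hAB.notMem_of_mem_right hτB (by rwa [← hxσ τ, ← h])).elim
    · exact (hAB.notMem_of_mem_right hσB (by rwa [← hxσ σ, h])).elim
    · exact mul_right_cancel h
  have := Set.ncard_le_ncard_of_injOn f hmaps hinj
  have := le_ncard_setOf_apply_mem_apply_mem hxy hAB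
  omega

end Counting

open Fin

section Fibers

variable {m : ℕ}

def extendLast : Perm (Fin m) →* Perm (Fin (m + 1)) :=
  Perm.extendDomainHom (finSuccAboveEquiv (last m))

lemma extendLast_apply_castSucc (π : Perm (Fin m)) (j : Fin m) :
    extendLast π j.castSucc = (π j).castSucc := by
  simpa [extendLast, finSuccAboveEquiv_apply] using
    Perm.extendDomain_apply_image π (finSuccAboveEquiv (last m)) j

lemma extendLast_apply_last (π : Perm (Fin m)) : extendLast π (last m) = last m :=
  Perm.extendDomain_apply_not_subtype π _ (by simp)

lemma extendLast_injective : Function.Injective (extendLast (m := m)) :=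
  Perm.extendDomainHom_injective _

lemma extendLast_swap (a b : Fin m) :
    extendLast (swap a b) = swap a.castSucc b.castSucc := by
  ext x
  induction x using lastCases with
  | last => rw [extendLast_apply_last,
      swap_apply_of_ne_of_ne (castSucc_lt_last a).ne' (castSucc_lt_last b).ne']
  | cast j => simp [extendLast_apply_castSucc, swap_apply_def, apply_ite castSucc]

lemma exists_extendLast_eq {τ : Perm (Fin (m + 1))} (h : τ (last m) = last m) :
    ∃ π, extendLast π = τ := by
  have hτ (x : Fin (m + 1)) : τ x ≠ last m ↔ x ≠ last m := by
    rw [← h, τ.injective.ne_iff, h]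
  refine ⟨(finSuccAboveEquiv (last m)).symm.permCongr (τ.subtypePerm hτ), ?_⟩
  ext x
  induction x using lastCases with
  | last => rw [extendLast_apply_last, h]
  | cast j => simp [extendLast_apply_castSucc, Equiv.permCongr_apply,
      finSuccAboveEquiv_symm_apply_last, finSuccAboveEquiv_apply]

def toFiber (i : Fin (m + 1)) (π : Perm (Fin m)) : Perm (Fin (m + 1)) :=
  swap i (last m) * extendLast π

lemma toFiber_apply_last (i : Fin (m + 1)) (π : Perm (Fin m)) : toFiber i π (last m) = i := by
  simp [toFiber, extendLast_apply_last]

lemma toFiber_injective (i : Fin (m + 1)) : Function.Injective (toFiber i) :=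
  fun _ _ h => extendLast_injective (mul_left_cancel h)

lemma toFiber_inv_mul (i : Fin (m + 1)) (π π' : Perm (Fin m)) :
    (toFiber i π)⁻¹ * toFiber i π' = extendLast (π⁻¹ * π') := by
  simp [toFiber, mul_assoc]

lemma exists_toFiber_eq {i : Fin (m + 1)} {σ : Perm (Fin (m + 1))} (h : σ (last m) = i) :
    ∃ π, toFiber i π = σ := by
  obtain ⟨π, hπ⟩ := exists_extendLast_eq (τ := swap i (last m) * σ) (by simp [h])
  exact ⟨π, by rw [toFiber, hπ, ← mul_assoc, swap_mul_self, one_mul]⟩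

lemma factorial_le_ncard_apply_last_ne (hm : 1 ≤ m) (k : Fin (m + 1)) :
    m ! ≤ {σ : Perm (Fin (m + 1)) | σ (last m) ≠ k}.ncard := by
  have : Nontrivial (Fin (m + 1)) := Fin.nontrivial_iff_two_le.2 (by omega)
  obtain ⟨i, hi⟩ := exists_ne k
  calc m ! = (Set.range (toFiber i)).ncard := by
        rw [← Set.image_univ, Set.ncard_image_of_injective _ (toFiber_injective i),
          Set.ncard_univ, Nat.card_perm, Nat.card_eq_fintype_card, Fintype.card_fin]
    _ ≤ _ := Set.ncard_le_ncard (by rintro _ ⟨π, rfl⟩; simpa [toFiber_apply_last] using hi)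

end Fibers

-- Zero-indexed like `cwGen`, whose generators these are, except for `(2 n)`.
def starPathGens (m : ℕ) : Set (Perm (Fin m)) :=
  {s | ∃ i j : Fin m, s = swap i j ∧ ((i : ℕ) = 0 ∧ j ≠ i ∨ (j : ℕ) = i + 1 ∧ 1 ≤ (i : ℕ))}

abbrev starPath (m : ℕ) : SimpleGraph (Perm (Fin m)) := mulCayley (starPathGens m)

lemma ne_one_of_mem_starPathGens {m : ℕ} {s : Perm (Fin m)} (hs : s ∈ starPathGens m) :
    s ≠ 1 := by
  obtain ⟨i, j, rfl, h⟩ := hs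
  rw [Ne, swap_eq_one_iff]
  rintro rfl
  omega

variable {M : ℕ}

lemma extendLast_mem_starPathGens {s : Perm (Fin M)} (hs : s ∈ starPathGens M) :
    extendLast s ∈ starPathGens (M + 1) := by
  obtain ⟨i, j, rfl, h⟩ := hs
  exact ⟨i.castSucc, j.castSucc, extendLast_swap i j, by simpa [castSucc_inj] using h⟩

lemma swap_zero_last_mem_starPathGens (h : (0 : Fin (M + 1)) ≠ last M) :
    swap 0 (last M) ∈ starPathGens (M + 1) :=
  ⟨0, last M, rfl, .inl ⟨rfl, h.symm⟩⟩

/-- `G` contains a copy of `starPath M` on every fibre `{σ | σ (last M) = i}` (the copy `CW_n^i`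
of the paper when `G = CW n`), embedded by `toFiber i`. -/
structure IsStarPathExtension (G : SimpleGraph (Perm (Fin (M + 1)))) (q : Fin (M + 1)) :
    Prop where
  adj_extendLast : ∀ g, ∀ s ∈ starPathGens M, G.Adj g (g * extendLast s)
  adj_swap_zero_last : ∀ g, G.Adj g (g * swap 0 (last M))
  adj_swap_last : ∀ g, G.Adj g (g * swap q (last M))
  ne_zero : q ≠ 0
  ne_last : q ≠ last M

namespace IsStarPathExtension

variable {G : SimpleGraph (Perm (Fin (M + 1)))} {q : Fin (M + 1)}

lemma of_adj_mul {S : Set (Perm (Fin (M + 1)))} (hadj : ∀ g, ∀ s ∈ S, s ≠ 1 → G.Adj g (g * s))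
    (hS : starPathGens (M + 1) ⊆ S) (hq : swap q (last M) ∈ S) (hq0 : q ≠ 0)
    (hqL : q ≠ last M) : IsStarPathExtension G q :=
  have h0L : (0 : Fin (M + 1)) ≠ last M := fun h => hq0 (Fin.ext (by
    have := q.isLt; have := congrArg Fin.val h; simp at this; omega))
  { adj_extendLast g s hs := hadj g _ (hS (extendLast_mem_starPathGens hs))
      ((map_ne_one_iff _ extendLast_injective).2 (ne_one_of_mem_starPathGens hs))
    adj_swap_zero_last g := hadj g _ (hS (swap_zero_last_mem_starPathGens h0L))
      (by rwa [Ne, swap_eq_one_iff])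
    adj_swap_last g := hadj g _ hq (by rwa [Ne, swap_eq_one_iff])
    ne_zero := hq0
    ne_last := hqL }

lemma zero_ne_last (hG : IsStarPathExtension G q) : (0 : Fin (M + 1)) ≠ last M :=
  fun h => (hG.adj_swap_zero_last 1).ne (by rw [h, swap_self, one_mul]; rfl)

def toFiberHom (hG : IsStarPathExtension G q) (i : Fin (M + 1)) : starPath M →g G where
  toFun := toFiber i
  map_rel' {a b} h := by
    obtain ⟨-, hab | hba⟩ := (mulCayley_adj _ a b).1 h
    · have := hG.adj_extendLast (toFiber i a) _ hab
      rwa [← toFiber_inv_mul, mul_inv_cancel_left] at this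
    · have := hG.adj_extendLast (toFiber i b) _ hba
      rw [← toFiber_inv_mul, mul_inv_cancel_left] at this
      exact this.symm

lemma reachIn_of_fiber (hG : IsStarPathExtension G q)
    (hSP : (starPath M).IsPreconnectedAfterDeleting (2 * M - 4)) {F T : Set (Perm (Fin (M + 1)))}
    {i : Fin (M + 1)} (hFi : (F ∩ {σ | σ (last M) = i}).ncard ≤ 2 * M - 4)
    (hT : {σ | σ (last M) = i} \ F ⊆ T) {u v : Perm (Fin (M + 1))} (hu : u ∉ F) (hv : v ∉ F)
    (hui : u (last M) = i) (hvi : v (last M) = i) : G.ReachIn T u v := by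
  obtain ⟨π, rfl⟩ := exists_toFiber_eq hui
  obtain ⟨π', rfl⟩ := exists_toFiber_eq hvi
  have hF' : (toFiber i ⁻¹' F).ncard ≤ 2 * M - 4 :=
    (Set.ncard_le_ncard_of_injOn (toFiber i) (fun π hπ => by exact ⟨hπ, toFiber_apply_last i π⟩)
      (toFiber_injective i).injOn).trans hFi
  refine (hSP _ hF' π hu π' hv).map (hG.toFiberHom i) fun π hπ => hT ?_
  exact ⟨toFiber_apply_last i π, hπ⟩

lemma reachIn_of_spread (hG : IsStarPathExtension G q) (hM : 3 ≤ M)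
    (hSP : (starPath M).IsPreconnectedAfterDeleting (2 * M - 4)) {F : Set (Perm (Fin (M + 1)))}
    {I : Set (Fin (M + 1))} (hfiber : ∀ i ∈ I, (F ∩ {σ | σ (last M) = i}).ncard ≤ 2 * M - 4)
    (hF : (F ∩ {σ | σ (last M) ∈ I}).ncard < 2 * (I.ncard - 1)) {u v : Perm (Fin (M + 1))}
    (hu : u ∈ {σ | σ (last M) ∈ I} \ F) (hv : v ∈ {σ | σ (last M) ∈ I} \ F) :
    G.ReachIn ({σ | σ (last M) ∈ I} \ F) u v := by
  refine reachIn_of_fibers (c := fun σ => σ (last M)) (I := I) (fun _ hw => hw.1) ?_ ?_ hu hv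
  · intro a ha b hb hab
    refine hG.reachIn_of_fiber hSP (hfiber _ ha.1) ?_ ha.2 hb.2 rfl hab.symm
    rintro σ ⟨hσa, hσ⟩
    exact ⟨by rw [Set.mem_ofPred_eq, hσa]; exact ha.1, hσ⟩
  rintro A hAI ⟨a, ha, haA⟩ ⟨b, hb, hbA⟩
  have hcount : (F ∩ {σ | σ (last M) ∈ A ∪ I \ A}).ncard <
      (Nat.card (Fin (M + 1)) - 2)! * (A.ncard * (I \ A).ncard) := by
    have hA : 0 < A.ncard := (Set.ncard_pos (Set.toFinite _)).2 ⟨_, haA⟩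
    have hB : 0 < (I \ A).ncard := (Set.ncard_pos (Set.toFinite _)).2 ⟨_, hb.1, hbA⟩
    have hI : (I \ A).ncard + A.ncard = I.ncard := Set.ncard_sdiff_add_ncard_of_subset hAI
    have hAB : I.ncard - 1 ≤ A.ncard * (I \ A).ncard := by
      have : A.ncard + (I \ A).ncard ≤ A.ncard * (I \ A).ncard + 1 := by nlinarith
      omega
    have hfact : 2 ≤ (M - 1)! := (by omega : 2 ≤ M - 1).trans (Nat.self_le_factorial _)
    rw [Set.union_sdiff_cancel hAI, Nat.card_eq_fintype_card, Fintype.card_fin,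
      show M + 1 - 2 = M - 1 by omega]
    have := Nat.mul_le_mul hfact hAB
    omega
  obtain ⟨σ, hσ, hσ', hσA, hσB⟩ := exists_notMem_mul_swap_notMem hG.zero_ne_last.symm
    (Set.disjoint_sdiff_right (s := A) (t := I)) F hcount
  refine ⟨σ, ⟨hAI hσA, hσ⟩, _, ⟨?_, hσ'⟩, hσA, ?_, hG.adj_swap_zero_last σ⟩ <;>
    simp only [Set.mem_ofPred_eq, Perm.mul_apply, swap_apply_right]
  exacts [hσB.1, hσB.2]

lemma exists_adj_escape (hG : IsStarPathExtension G q) {K : Set (Fin (M + 1))}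
    {F : Set (Perm (Fin (M + 1)))} (w : Perm (Fin (M + 1)))
    (hF : (F \ {σ | σ (last M) = w (last M)}).ncard + K.ncard ≤ 1) :
    ∃ w', G.Adj w w' ∧ w' ∉ F ∧ w' (last M) ∉ K ∧ w' (last M) ≠ w (last M) := by
  by_contra! h
  -- both neighbours `w * swap 0 (last M)` and `w * swap q (last M)` leave the fibre of `w`,
  -- into different fibres, so each needs its own obstacle
  have hblocked (p : Fin (M + 1)) (hp : p ≠ last M) (hadj : G.Adj w (w * swap p (last M))) :
      w * swap p (last M) ∈ F \ {σ | σ (last M) = w (last M)} ∨ w p ∈ K := by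
    have hval : (w * swap p (last M)) (last M) = w p := by simp
    have hne : w p ≠ w (last M) := w.injective.ne hp
    by_cases hpF : w * swap p (last M) ∈ F
    · exact .inl ⟨hpF, by simpa [hval] using hne⟩
    · exact .inr (by_contra fun hpK => hne (hval ▸ h _ hadj hpF (hval ▸ hpK)))
  have hne : w 0 ≠ w q := w.injective.ne hG.ne_zero.symm
  have hne' : w * swap 0 (last M) ≠ w * swap q (last M) := fun h' => hne (by
    simpa using congrArg (· (last M)) h')
  obtain h0 | h0 := hblocked 0 hG.zero_ne_last (hG.adj_swap_zero_last w) <;>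
  obtain hq | hq := hblocked q hG.ne_last (hG.adj_swap_last w)
  · have := (Set.one_lt_ncard (Set.toFinite _)).2 ⟨_, h0, _, hq, hne'⟩; omega
  · have := (Set.ncard_pos (Set.toFinite _)).2 ⟨_, h0⟩
    have := (Set.ncard_pos (Set.toFinite _)).2 ⟨_, hq⟩; omega
  · have := (Set.ncard_pos (Set.toFinite _)).2 ⟨_, h0⟩
    have := (Set.ncard_pos (Set.toFinite _)).2 ⟨_, hq⟩; omega
  · have := (Set.one_lt_ncard (Set.toFinite _)).2 ⟨_, h0, _, hq, hne⟩; omega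

lemma reachIn_of_concentrated (hG : IsStarPathExtension G q) (hM : 3 ≤ M)
    (hSP : (starPath M).IsPreconnectedAfterDeleting (2 * M - 4)) {K : Set (Fin (M + 1))}
    {F : Set (Perm (Fin (M + 1)))} {i₀ : Fin (M + 1)}
    (hF : (F \ {σ | σ (last M) = i₀}).ncard + K.ncard ≤ 1) {u v : Perm (Fin (M + 1))}
    (hu : u ∈ {σ | σ (last M) ∉ K} \ F) (hv : v ∈ {σ | σ (last M) ∉ K} \ F) :
    G.ReachIn ({σ | σ (last M) ∉ K} \ F) u v := by
  set I : Set (Fin (M + 1)) := (insert i₀ K)ᶜ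
  have hFI : F ∩ {σ | σ (last M) ∈ I} ⊆ F \ {σ | σ (last M) = i₀} :=
    fun σ ⟨hσF, hσI⟩ => ⟨hσF, fun h => hσI (.inl h)⟩
  have hI : M - 1 ≤ I.ncard := by
    have := Set.ncard_insert_le i₀ K
    rw [Set.ncard_compl, Nat.card_eq_fintype_card, Fintype.card_fin]
    omega
  have hcore {a b} (ha : a ∈ {σ | σ (last M) ∈ I} \ F) (hb : b ∈ {σ | σ (last M) ∈ I} \ F) :
      G.ReachIn ({σ | σ (last M) ∈ I} \ F) a b := hG.reachIn_of_spread hM hSP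
    (fun i hi => by
      have := Set.ncard_le_ncard (fun σ (hσ : σ ∈ F ∩ {σ | σ (last M) = i}) => hFI
        ⟨hσ.1, by rw [Set.mem_ofPred_eq, hσ.2]; exact hi⟩)
      omega)
    (by have := Set.ncard_le_ncard hFI; omega) ha hb
  have hescape (w) (hw : w ∈ {σ | σ (last M) ∉ K} \ F) :
      ∃ w' ∈ {σ | σ (last M) ∈ I} \ F, G.ReachIn ({σ | σ (last M) ∉ K} \ F) w w' := by
    by_cases hwi : w (last M) = i₀
    · obtain ⟨w', hadj, hw'F, hw'K, hw'w⟩ := hG.exists_adj_escape (K := K) w (by rwa [hwi])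
      refine ⟨w', ⟨?_, hw'F⟩, hadj.reachIn hw ⟨hw'K, hw'F⟩⟩
      rintro (h | h)
      exacts [hw'w (h.trans hwi.symm), hw'K h]
    · exact ⟨w, ⟨by rintro (h | h); exacts [hwi h, hw.1 h], hw.2⟩, .refl w⟩
  obtain ⟨u', hu', huu'⟩ := hescape u hu
  obtain ⟨v', hv', hvv'⟩ := hescape v hv
  have hsub : {σ | σ (last M) ∈ I} \ F ⊆ {σ | σ (last M) ∉ K} \ F :=
    fun σ hσ => ⟨fun h => hσ.1 (.inr h), hσ.2⟩
  exact (huu'.trans ((hcore hu' hv').mono hsub)).trans hvv'.symm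

theorem reachIn_of_ncard_add_ncard_le (hG : IsStarPathExtension G q) (hM : 3 ≤ M)
    (hSP : (starPath M).IsPreconnectedAfterDeleting (2 * M - 4)) {K : Set (Fin (M + 1))}
    {F : Set (Perm (Fin (M + 1)))} (hK : K.ncard ≤ 1) (hF : F.ncard + K.ncard ≤ 2 * M - 2)
    {u v : Perm (Fin (M + 1))} (hu : u ∈ {σ | σ (last M) ∉ K} \ F)
    (hv : v ∈ {σ | σ (last M) ∉ K} \ F) :
    G.ReachIn ({σ | σ (last M) ∉ K} \ F) u v := by
  by_cases hconc : ∃ i₀, 2 * M - 3 ≤ (F ∩ {σ | σ (last M) = i₀}).ncard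
  · obtain ⟨i₀, hi₀⟩ := hconc
    refine hG.reachIn_of_concentrated hM hSP (i₀ := i₀) ?_ hu hv
    have := Set.ncard_inter_add_ncard_sdiff_eq_ncard F {σ | σ (last M) = i₀}
    omega
  · simp only [not_exists, not_le] at hconc
    refine hG.reachIn_of_spread hM hSP (I := Kᶜ) (fun i _ => by have := hconc i; omega) ?_ hu hv
    have := Set.ncard_le_ncard (Set.inter_subset_left (s := F) (t := {σ | σ (last M) ∈ Kᶜ}))
    rw [Set.ncard_compl, Nat.card_eq_fintype_card, Fintype.card_fin]
    omega

end IsStarPathExtension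

lemma isStarPathExtension_starPath (hM : 3 ≤ M) :
    IsStarPathExtension (starPath (M + 1)) ⟨M - 1, by omega⟩ :=
  .of_adj_mul (fun g _ hs hs1 => mulCayley_adj_mul hs hs1 g) subset_rfl
    ⟨⟨M - 1, by omega⟩, last M, rfl, .inr ⟨by simp; omega, by simp; omega⟩⟩
    (by simp [Fin.ext_iff]; omega) (by simp [Fin.ext_iff]; omega)

lemma inv_mul_mem_starPathGens_three {g t : Perm (Fin 3)} (hg1 : g ≠ 1)
    (hg : g ∉ starPathGens 3) (ht : t ∈ starPathGens 3) : t⁻¹ * g ∈ starPathGens 3 := by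
  simp only [starPathGens, Set.mem_ofPred_eq] at *
  revert g t
  decide

lemma starPath_three_isPreconnectedAfterDeleting :
    (starPath 3).IsPreconnectedAfterDeleting 2 := by
  intro F hF u hu v hv
  by_cases huv : u = v ∨ (starPath 3).Adj u v
  · obtain rfl | hadj := huv
    exacts [.refl u, hadj.reachIn hu hv]
  obtain ⟨hne, hnadj⟩ := not_or.1 huv
  have hg1 : u⁻¹ * v ≠ 1 := by rwa [Ne, inv_mul_eq_one]
  have hg : u⁻¹ * v ∉ starPathGens 3 := fun h => hnadj (by
    simpa using mulCayley_adj_mul h hg1 u)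
  -- `u⁻¹ * v` is a 3-cycle, so every neighbour `u * t` of `u` is also a neighbour of `v`
  have hcommon (t) (ht : t ∈ starPathGens 3) (htF : u * t ∉ F) :
      (starPath 3).ReachIn Fᶜ u v := by
    have h := inv_mul_mem_starPathGens_three hg1 hg ht
    refine (Adj.reachIn hu htF (mulCayley_adj_mul ht (ne_one_of_mem_starPathGens ht) u)).trans
      (Adj.reachIn htF hv ?_)
    simpa [mul_assoc] using mulCayley_adj_mul h (ne_one_of_mem_starPathGens h) (u * t)
  obtain h | h | h : u * swap 0 1 ∉ F ∨ u * swap 0 2 ∉ F ∨ u * swap 1 2 ∉ F := by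
    by_contra! h
    have h3 : ({u * swap 0 1, u * swap 0 2, u * swap 1 2} : Set (Perm (Fin 3))).ncard = 3 :=
      Set.ncard_eq_three.2 ⟨_, _, _, by simp; decide, by simp; decide, by simp; decide, rfl⟩
    have := Set.ncard_le_ncard (s := {u * swap 0 1, u * swap 0 2, u * swap 1 2}) (t := F)
      (by simp [Set.insert_subset_iff, h])
    omega
  exacts [hcommon _ ⟨0, 1, rfl, .inl ⟨rfl, by decide⟩⟩ h,
    hcommon _ ⟨0, 2, rfl, .inl ⟨rfl, by decide⟩⟩ h, hcommon _ ⟨1, 2, rfl, .inr ⟨rfl, le_rfl⟩⟩ h]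

theorem starPath_isPreconnectedAfterDeleting {m : ℕ} (hm : 3 ≤ m) :
    (starPath m).IsPreconnectedAfterDeleting (2 * m - 4) := by
  induction m, hm using Nat.le_induction with
  | base => exact starPath_three_isPreconnectedAfterDeleting
  | succ M hM ih =>
    intro F hF u hu v hv
    refine ((isStarPathExtension_starPath hM).reachIn_of_ncard_add_ncard_le hM ih (K := ∅)
      (by simp) (by simp; omega) ⟨by simp, hu⟩ ⟨by simp, hv⟩).mono fun σ hσ => hσ.2

lemma CW_adj_mul {n : ℕ} {s : Perm (Fin n)} (hs : s ∈ cwGen n) (hs1 : s ≠ 1) (g : Perm (Fin n)) :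
    (CW n).Adj g (g * s) :=
  ⟨by simpa using hs1, by simpa using hs⟩

lemma isStarPathExtension_CW (hM : 2 ≤ M) : IsStarPathExtension (CW (M + 1)) ⟨1, by omega⟩ :=
  .of_adj_mul (fun g _ hs hs1 => CW_adj_mul hs hs1 g)
    (fun _ ⟨i, j, hs, h⟩ => ⟨i, j, hs, h.imp_right .inl⟩)
    ⟨⟨1, by omega⟩, last M, rfl, .inr (.inr ⟨rfl, by simp⟩)⟩
    (by simp [Fin.ext_iff]) (by simp [Fin.ext_iff]; omega)

theorem CW_reachIn (hM : 3 ≤ M) (k : Fin (M + 1)) {F : Set (Perm (Fin (M + 1)))}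
    (hF : F.ncard ≤ 2 * M - 3) {u v : Perm (Fin (M + 1))}
    (hu : u ∈ {σ | σ (last M) ≠ k} \ F) (hv : v ∈ {σ | σ (last M) ≠ k} \ F) :
    (CW (M + 1)).ReachIn ({σ | σ (last M) ≠ k} \ F) u v :=
  (isStarPathExtension_CW (by omega)).reachIn_of_ncard_add_ncard_le hM
    (starPath_isPreconnectedAfterDeleting hM) (K := {k}) (by simp) (by simp; omega) hu hv

lemma one_lt_ncard_apply_last_ne_sdiff (hM : 3 ≤ M) (k : Fin (M + 1))
    {F : Set (Perm (Fin (M + 1)))} (hFk : F ⊆ {σ | σ (last M) ≠ k}) (hF : F.ncard ≤ 2 * M - 3) :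
    1 < ({σ | σ (last M) ≠ k} \ F).ncard := by
  have hfact : 2 * M ≤ M ! := by
    rw [← Nat.mul_factorial_pred (by omega : M ≠ 0), mul_comm]
    exact Nat.mul_le_mul_left M ((by omega : 2 ≤ M - 1).trans (Nat.self_le_factorial _))
  have := factorial_le_ncard_apply_last_ne (by omega : 1 ≤ M) k
  rw [Set.ncard_sdiff hFk]
  omega

end CayleyStarPath

open CayleyStarPath in
/-- For n ≥ 4 and any index k, the subgraph of CW_n induced by the vertices outside the
copy CW_n^k has vertex connectivity at least 2n − 4. -/
theorem stmt5 (n : ℕ) (hn : 4 ≤ n) (k : Fin n) :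
    2 * n - 4 ≤ kappa ((CW n).induce {σ : Equiv.Perm (Fin n) | σ ⟨n - 1, by omega⟩ ≠ k}) := by
  obtain ⟨M, rfl⟩ : ∃ M, n = M + 1 := ⟨n - 1, by omega⟩
  change 2 * (M + 1) - 4 ≤ kappa ((CW (M + 1)).induce {σ | σ (Fin.last M) ≠ k})
  apply le_kappa_induce
  · exact fun F _ hF u hu v hv => CW_reachIn (by omega) k (by omega) hu hv
  · exact fun F hFk hF => one_lt_ncard_apply_last_ne_sdiff (by omega) k hFk (by omega)
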